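/- arXiv:1601.07937 — 6 statements merged into one kernel-verified Lean document; each statement's English description precedes it below -/
import Mathlib

section
/- (Babuška–Nečas theorem.) Let X and Y be Hilbert spaces over a fixed field 𝔽 ∈ {ℝ, ℂ}, let ℓ : Y → 𝔽 be a continuous linear form and b0 : X × Y → 𝔽 a continuous bilinear form (sesquilinear if 𝔽 = ℂ). If there exists an inf-sup constant γ > 0 such that for all x ∈ X, sup_{y ∈ Y\{0}} |b0(x,y)|/‖y‖_Y ≥ γ‖x‖_X, and ℓ satisfies the compatibility condition ℓ(y) = 0 for all y ∈ Y00 = {y ∈ Y : b0(x,y) = 0 for all x ∈ X}, then the problem of finding x ∈ X with b0(x,y) = ℓ(y) for all y ∈ Y has a unique solution x, and it satisfies the stability estimate ‖x‖_X ≤ (1/γ)‖ℓ‖_{Y'}, where ‖ℓ‖_{Y'} = sup_{y ∈ Y\{0}} |ℓ(y)|/‖y‖_Y. -/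
/-!
Through the Riesz isomorphism `b0` becomes a bounded linear operator `B : X → Y`, and the inf-sup
condition says `γ ‖x‖ ≤ ‖B x‖`. Hence `B` is injective with closed range, so its range equals
`(range B)ᗮᗮ`. The vectors orthogonal to `range B` are exactly `Y00`, so the compatibility
condition places the Riesz representative of `ℓ` in `(range B)ᗮᗮ = range B`; the stability
estimate is the inf-sup bound applied to the solution.
-/

open InnerProductSpace

namespace ContinuousLinearMap

variable {𝕜 𝕜₂ E F : Type*} [NontriviallyNormedField 𝕜] [NontriviallyNormedField 𝕜₂]
  {σ : 𝕜 →+* 𝕜₂}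
  [SeminormedAddCommGroup E] [NormedSpace 𝕜 E] [SeminormedAddCommGroup F] [NormedSpace 𝕜₂ F]

theorem sSup_norm_apply_div_norm_le_opNorm [RingHomIsometric σ] (f : E →SL[σ] F) :
    sSup ((fun y => ‖f y‖ / ‖y‖) '' {y | y ≠ 0}) ≤ ‖f‖ := by
  refine Real.sSup_le ?_ (norm_nonneg f)
  rintro _ ⟨y, -, rfl⟩
  exact div_le_of_le_mul₀ (norm_nonneg y) (norm_nonneg f) (f.le_opNorm y)

theorem antilipschitz_of_mul_norm_le (f : E →SL[σ] F) {γ : ℝ} (hγ : 0 < γ)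
    (hf : ∀ x, γ * ‖x‖ ≤ ‖f x‖) : AntilipschitzWith (Real.toNNReal γ⁻¹) f :=
  f.antilipschitz_of_bound fun x => by
    rw [Real.coe_toNNReal _ (inv_nonneg.2 hγ.le), ← div_eq_inv_mul, le_div_iff₀' hγ]
    exact hf x

end ContinuousLinearMap

section BabuskaNecas

variable {𝕜 X Y : Type*} [RCLike 𝕜]
  [NormedAddCommGroup X] [NormedSpace 𝕜 X] [CompleteSpace X]
  [NormedAddCommGroup Y] [InnerProductSpace 𝕜 Y] [CompleteSpace Y]

theorem mem_range_of_mul_norm_le_of_apply_eq_zero (b : X →L⋆[𝕜] StrongDual 𝕜 Y) {γ : ℝ}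
    (hγ : 0 < γ) (hb : ∀ x, γ * ‖x‖ ≤ ‖b x‖) (ℓ : StrongDual 𝕜 Y)
    (hℓ : ∀ y, (∀ x, b x y = 0) → ℓ y = 0) :
    ℓ ∈ Set.range b := by
  set B : X →L[𝕜] Y := (toDual 𝕜 Y).symm.toContinuousLinearEquiv.toContinuousLinearMap.comp b
  have inner_B : ∀ x y, inner 𝕜 (B x) y = b x y := fun x y => by simp [B]
  have hB : ∀ x, γ * ‖x‖ ≤ ‖B x‖ := fun x => by simpa [B] using hb x
  set K := LinearMap.range (B : X →ₗ[𝕜] Y)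
  have : CompleteSpace K := by
    have hclosed := (B.antilipschitz_of_mul_norm_le hγ hB).isClosed_range B.uniformContinuous
    exact (LinearMap.coe_range (B : X →ₗ[𝕜] Y) ▸ hclosed).completeSpace_coe
  have hw : (toDual 𝕜 Y).symm ℓ ∈ Kᗮᗮ := by
    refine (Submodule.mem_orthogonal' _ _).2 fun u hu => ?_
    have hbu : ∀ x, b x u = 0 := fun x => by
      rw [← inner_B]; exact (Submodule.mem_orthogonal _ _).1 hu _ ⟨x, rfl⟩
    simp [toDual_symm_apply, hℓ u hbu]
  obtain ⟨x, hx⟩ := K.orthogonal_orthogonal ▸ hw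
  exact ⟨x, by simpa [B] using congrArg (toDual 𝕜 Y) hx⟩

end BabuskaNecas

/-- Babuška–Nečas theorem: if the continuous bilinear (sesquilinear) form `b0`
on `X × Y` satisfies the inf-sup condition with constant `γ > 0` and the
continuous linear form `ℓ` vanishes on
`Y00 = {y ∈ Y : b0(x,y) = 0 for all x ∈ X}`, then the problem
`b0(x,y) = ℓ(y)` for all `y ∈ Y` has a unique solution `x`, which satisfies
`‖x‖_X ≤ (1/γ)‖ℓ‖_{Y'}`. -/
theorem stmt_3 {𝕜 X Y : Type*} [RCLike 𝕜]
    [NormedAddCommGroup X] [InnerProductSpace 𝕜 X] [CompleteSpace X]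
    [NormedAddCommGroup Y] [InnerProductSpace 𝕜 Y] [CompleteSpace Y]
    (b0 : X →SL[starRingEnd 𝕜] Y →L[𝕜] 𝕜) (ℓ : Y →L[𝕜] 𝕜)
    (γ : ℝ) (hγ : 0 < γ)
    (hinf : ∀ x : X,
      γ * ‖x‖ ≤ sSup ((fun y => ‖b0 x y‖ / ‖y‖) '' {y : Y | y ≠ 0}))
    (hcompat : ∀ y : Y, (∀ x : X, b0 x y = 0) → ℓ y = 0) :
    ∃ x : X, (∀ y : Y, b0 x y = ℓ y) ∧ ‖x‖ ≤ 1 / γ * ‖ℓ‖ ∧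
      ∀ x' : X, (∀ y : Y, b0 x' y = ℓ y) → x' = x := by
  have hb : ∀ x, γ * ‖x‖ ≤ ‖b0 x‖ :=
    fun x => (hinf x).trans (b0 x).sSup_norm_apply_div_norm_le_opNorm
  obtain ⟨x, rfl⟩ := mem_range_of_mul_norm_le_of_apply_eq_zero b0 hγ hb ℓ hcompat
  refine ⟨x, fun y => rfl, ?_, fun x' hx' => ?_⟩
  · rw [one_div, ← div_eq_inv_mul, le_div_iff₀' hγ]
    exact hb x
  · exact (b0.antilipschitz_of_mul_norm_le hγ hb).injective (ContinuousLinearMap.ext hx')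
end

section
/- Let U and V be real Hilbert spaces, let V' denote the topological dual of V with dual norm ‖f‖_{V'} = sup_{v ∈ V\{0}} |f(v)|/‖v‖_V, let B : U → V' be a continuous linear operator, and let ℓ ∈ V'. Suppose there exists γ > 0 such that ‖Bu‖_{V'} ≥ γ‖u‖_U for all u ∈ U, and let U_h be a closed subspace of U. Then there exists a unique u_h ∈ U_h minimizing the residual, i.e. ‖B u_h − ℓ‖_{V'}² ≤ ‖Bu − ℓ‖_{V'}² for all u ∈ U_h, with equality only for u = u_h. -/
/-!
Through the Riesz isomorphism `R : V ≃ V'` the residual `‖Bu - ℓ‖_{V'}` becomes `‖Tu - y‖_V`,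
where `y = R⁻¹ ℓ` and `T = R⁻¹ ∘ B` is again bounded below. Being bounded below, `T` maps the closed subspace `U_h`
onto a complete subspace `T(U_h)` of `V`, so the orthogonal projection of `y` onto it is `T x`
for some `x ∈ U_h`, and Pythagoras gives
`‖Tu - y‖² = ‖Tx - y‖² + ‖Tu - Tx‖²` for `u ∈ U_h`; injectivity of `T` settles uniqueness.
-/

open scoped NNReal

theorem Submodule.norm_sub_sq_eq_norm_sub_starProjection_sq_add {𝕜 E : Type*} [RCLike 𝕜]
    [NormedAddCommGroup E] [InnerProductSpace 𝕜 E] (K : Submodule 𝕜 E)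
    [K.HasOrthogonalProjection] (y : E) {k : E} (hk : k ∈ K) :
    ‖y - k‖ ^ 2 = ‖y - K.starProjection y‖ ^ 2 + ‖K.starProjection y - k‖ ^ 2 := by
  have horth : inner 𝕜 (y - K.starProjection y) (K.starProjection y - k) = 0 :=
    K.inner_left_of_mem_orthogonal (K.sub_mem (K.starProjection_apply_mem y) hk)
      (K.sub_starProjection_mem_orthogonal y)
  rw [sq, sq, sq, ← norm_add_sq_eq_norm_sq_add_norm_sq_of_inner_eq_zero _ _ horth,
    sub_add_sub_cancel]

namespace AntilipschitzWith

variable {R 𝕜 E F : Type*} [Semiring R] [RCLike 𝕜] [NormedAddCommGroup E] [Module R E]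
  [NormedAddCommGroup F] [InnerProductSpace 𝕜 F] {σ : R →+* 𝕜} [RingHomSurjective σ]

theorem exists_mem_forall_norm_sub_sq_eq (T : E →SL[σ] F) {K : ℝ≥0}
    (hT : AntilipschitzWith K T) {S : Submodule R E} (hS : IsComplete (S : Set E)) (y : F) :
    ∃ x ∈ S, ∀ u ∈ S, ‖T u - y‖ ^ 2 = ‖T x - y‖ ^ 2 + ‖T u - T x‖ ^ 2 := by
  set L := S.map (T : E →ₛₗ[σ] F)
  have : CompleteSpace L := completeSpace_coe_iff_isComplete.mpr
    ((hT.isUniformInducing T.uniformContinuous).isComplete_iff.mpr hS)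
  obtain ⟨x, hx, hTx⟩ := L.starProjection_apply_mem y
  refine ⟨x, hx, fun u hu => ?_⟩
  have h := L.norm_sub_sq_eq_norm_sub_starProjection_sq_add y (k := T u) ⟨u, hu, rfl⟩
  simp only [← hTx, ContinuousLinearMap.coe_coe] at h
  rw [norm_sub_rev y (T u)] at h
  convert h using 3 <;> exact norm_sub_rev _ _

theorem exists_mem_forall_norm_sub_sq_le_and_unique (T : E →SL[σ] F) {K : ℝ≥0}
    (hT : AntilipschitzWith K T) {S : Submodule R E} (hS : IsComplete (S : Set E)) (y : F) :
    ∃ x ∈ S, ∀ u ∈ S,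
      ‖T x - y‖ ^ 2 ≤ ‖T u - y‖ ^ 2 ∧ (‖T u - y‖ ^ 2 = ‖T x - y‖ ^ 2 → u = x) := by
  obtain ⟨x, hx, hpyth⟩ := hT.exists_mem_forall_norm_sub_sq_eq T hS y
  refine ⟨x, hx, fun u hu => ?_⟩
  rw [hpyth u hu]
  refine ⟨le_add_of_nonneg_right (sq_nonneg _), fun h => ?_⟩
  have : ‖T u - T x‖ = 0 := by simpa using h
  exact hT.injective (sub_eq_zero.mp (norm_eq_zero.mp this))

end AntilipschitzWith

/-- Existence and uniqueness of the residual minimizer: if `B : U → V'` is a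
continuous linear operator which is bounded below (`‖Bu‖_{V'} ≥ γ‖u‖_U` for some
`γ > 0`), `ℓ ∈ V'`, and `U_h` is a closed subspace of `U`, then there is a unique
`u_h ∈ U_h` minimizing `u ↦ ‖Bu − ℓ‖_{V'}²` over `U_h`, with equality in the
minimization only for `u = u_h`. -/
theorem stmt_4 {U V : Type*}
    [NormedAddCommGroup U] [InnerProductSpace ℝ U] [CompleteSpace U]
    [NormedAddCommGroup V] [InnerProductSpace ℝ V] [CompleteSpace V]
    (B : U →L[ℝ] StrongDual ℝ V) (ℓ : StrongDual ℝ V)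
    (γ : ℝ) (hγ : 0 < γ) (hB : ∀ u : U, γ * ‖u‖ ≤ ‖B u‖)
    (Uh : Submodule ℝ U) (hUh : IsClosed (Uh : Set U)) :
    ∃ uh ∈ Uh, ∀ u ∈ Uh,
      ‖B uh - ℓ‖ ^ 2 ≤ ‖B u - ℓ‖ ^ 2 ∧
      (‖B u - ℓ‖ ^ 2 = ‖B uh - ℓ‖ ^ 2 → u = uh) := by
  set e := (InnerProductSpace.toDual ℝ V).symm
  let T := (e : StrongDual ℝ V →SL[starRingEnd ℝ] V).comp B
  have hnorm : ∀ u, ‖B u - ℓ‖ = ‖T u - e ℓ‖ := fun u => by simp [T, ← map_sub]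
  obtain ⟨K, hT⟩ := (antilipschitzWith_iff_exists_mul_le_norm (f := T)).mpr
    ⟨γ, hγ, fun u => by simpa [T] using hB u⟩
  simpa only [hnorm] using hT.exists_mem_forall_norm_sub_sq_le_and_unique T hUh.isComplete (e ℓ)
end

section
/- Let U and V be real Hilbert spaces, V' the topological dual of V with dual norm ‖f‖_{V'} = sup_{v ∈ V\{0}} |f(v)|/‖v‖_V, R_V : V → V' the Riesz map determined by (R_V v)(w) = (v,w)_V, B : U → V' a continuous linear operator with associated bilinear form b(u,v) = (Bu)(v), ℓ ∈ V', and U_h a closed subspace of U. Then a pair (u_h, ψ) ∈ U_h × V satisfies the saddle-point system: −(ψ, v)_V + b(u_h, v) = ℓ(v) for all v ∈ V, and b(δu, ψ) = 0 for all δu ∈ U_h, if and only if ψ = R_V⁻¹(B u_h − ℓ) and u_h minimizes u ↦ ‖Bu − ℓ‖_{V'}² over U_h. -/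
/-!
Write `R = R_V⁻¹`. Since `R` is a linear isometry, `‖Bu − ℓ‖_{V'} = ‖Rℓ − RBu‖_V`, so `u_h`
minimizes the residual over `U_h` exactly when `RBu_h` is a best approximation of `Rℓ` in the
subspace `R B U_h` of `V`, i.e. when `Rℓ − RBu_h = −ψ` is orthogonal to `R B U_h`. As
`⟪ψ, RBδu⟫ = b(δu, ψ)`, this is the second equation of the saddle-point system; the first
one says `ψ = R(Bu_h − ℓ)`.
-/

open scoped RealInnerProductSpace

theorem norm_sub_eq_iInf_iff_forall_norm_sub_le {E : Type*} [SeminormedAddCommGroup E]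
    {s : Set E} {u v : E} (hv : v ∈ s) :
    ‖u - v‖ = ⨅ w : s, ‖u - w‖ ↔ ∀ w ∈ s, ‖u - v‖ ≤ ‖u - w‖ := by
  have hbdd : BddBelow (Set.range fun w : s ↦ ‖u - w‖) :=
    ⟨0, Set.forall_mem_range.2 fun _ ↦ norm_nonneg _⟩
  constructor
  · intro h w hw
    exact h ▸ ciInf_le hbdd ⟨w, hw⟩
  · intro h
    have : Nonempty s := ⟨⟨v, hv⟩⟩
    exact le_antisymm (le_ciInf fun w ↦ h w w.2) (ciInf_le hbdd ⟨v, hv⟩)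

theorem Submodule.forall_norm_sub_le_iff_real_inner_eq_zero {F : Type*} [NormedAddCommGroup F]
    [InnerProductSpace ℝ F] (K : Submodule ℝ F) {u v : F} (hv : v ∈ K) :
    (∀ w ∈ K, ‖u - v‖ ≤ ‖u - w‖) ↔ ∀ w ∈ K, ⟪u - v, w⟫ = 0 :=
  (norm_sub_eq_iInf_iff_forall_norm_sub_le (s := (K : Set F)) hv).symm.trans
    (norm_eq_iInf_iff_real_inner_eq_zero K hv)

section Riesz

variable {V : Type*} [NormedAddCommGroup V] [InnerProductSpace ℝ V] [CompleteSpace V]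

open InnerProductSpace

theorem eq_toDual_symm_iff_forall_inner_eq {ψ : V} {f : StrongDual ℝ V} :
    ψ = (toDual ℝ V).symm f ↔ ∀ v, ⟪ψ, v⟫ = f v := by
  rw [LinearIsometryEquiv.eq_symm_apply, ContinuousLinearMap.ext_iff]
  rfl

theorem forall_apply_toDual_symm_residual_eq_zero_iff {U : Type*} [AddCommGroup U] [Module ℝ U]
    (B : U →ₗ[ℝ] StrongDual ℝ V) (ℓ : StrongDual ℝ V) {Uh : Submodule ℝ U} {uh : U}
    (huh : uh ∈ Uh) :
    (∀ δu ∈ Uh, B δu ((toDual ℝ V).symm (B uh - ℓ)) = 0) ↔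
      ∀ u ∈ Uh, ‖B uh - ℓ‖ ≤ ‖B u - ℓ‖ := by
  set R := (toDual ℝ V).symm
  have hnorm : ∀ u, ‖B u - ℓ‖ = ‖R ℓ - R (B u)‖ := fun u ↦ by
    rw [← map_sub, LinearIsometryEquiv.norm_map, norm_sub_rev]
  have happly : ∀ δu, B δu (R (B uh - ℓ)) = -⟪R ℓ - R (B uh), R (B δu)⟫ := fun δu ↦ by
    rw [← inner_neg_left, ← map_sub, ← map_neg, neg_sub, real_inner_comm,
      toDual_symm_apply]
  have key := (Uh.map (R.toLinearEquiv.toLinearMap ∘ₗ B)).forall_norm_sub_le_iff_real_inner_eq_zero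
    (u := R ℓ) (Submodule.mem_map_of_mem huh)
  simp only [Submodule.mem_map, forall_exists_index, and_imp, forall_apply_eq_imp_iff₂,
    LinearMap.comp_apply, LinearEquiv.coe_coe, LinearIsometryEquiv.coe_toLinearEquiv] at key
  simp only [happly, neg_eq_zero, hnorm, key]

end Riesz

theorem stmt_6_general {U V : Type*}
    [NormedAddCommGroup U] [InnerProductSpace ℝ U]
    [NormedAddCommGroup V] [InnerProductSpace ℝ V] [CompleteSpace V]
    (B : U →L[ℝ] StrongDual ℝ V) (ℓ : StrongDual ℝ V)
    (Uh : Submodule ℝ U)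
    (uh : U) (huh : uh ∈ Uh) (ψ : V) :
    ((∀ v : V, -⟪ψ, v⟫ + B uh v = ℓ v) ∧ (∀ δu ∈ Uh, B δu ψ = 0)) ↔
      (ψ = (InnerProductSpace.toDual ℝ V).symm (B uh - ℓ) ∧
        ∀ u ∈ Uh, ‖B uh - ℓ‖ ^ 2 ≤ ‖B u - ℓ‖ ^ 2) := by
  have hfirst : (∀ v : V, -⟪ψ, v⟫ + B uh v = ℓ v) ↔
      ψ = (InnerProductSpace.toDual ℝ V).symm (B uh - ℓ) := by
    rw [eq_toDual_symm_iff_forall_inner_eq]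
    refine forall_congr' fun v ↦ ?_
    rw [sub_apply]
    constructor <;> intro h <;> linarith
  rw [hfirst]
  refine and_congr_right fun hψ ↦ ?_
  subst hψ
  simp only [sq_le_sq₀ (norm_nonneg _) (norm_nonneg _)]
  exact forall_apply_toDual_symm_residual_eq_zero_iff (B : U →ₗ[ℝ] StrongDual ℝ V) ℓ huh

/-- Saddle-point characterization of the residual minimizer: `(u_h, ψ)` with
`u_h ∈ U_h` satisfies the system `−(ψ,v)_V + b(u_h,v) = ℓ(v)` for all `v ∈ V`
and `b(δu,ψ) = 0` for all `δu ∈ U_h` if and only if `ψ = R_V⁻¹(B u_h − ℓ)` is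
the error representation function and `u_h` minimizes `u ↦ ‖Bu − ℓ‖_{V'}²`
over `U_h`. -/
theorem stmt_6 {U V : Type*}
    [NormedAddCommGroup U] [InnerProductSpace ℝ U] [CompleteSpace U]
    [NormedAddCommGroup V] [InnerProductSpace ℝ V] [CompleteSpace V]
    (B : U →L[ℝ] StrongDual ℝ V) (ℓ : StrongDual ℝ V)
    (Uh : Submodule ℝ U) (hUh : IsClosed (Uh : Set U))
    (uh : U) (huh : uh ∈ Uh) (ψ : V) :
    ((∀ v : V, -⟪ψ, v⟫ + B uh v = ℓ v) ∧ (∀ δu ∈ Uh, B δu ψ = 0)) ↔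
      (ψ = (InnerProductSpace.toDual ℝ V).symm (B uh - ℓ) ∧
        ∀ u ∈ Uh, ‖B uh - ℓ‖ ^ 2 ≤ ‖B u - ℓ‖ ^ 2) :=
  stmt_6_general B ℓ Uh uh huh ψ
end

section
/- Let U and V be real Hilbert spaces, V' the topological dual of V with dual norm ‖f‖_{V'} = sup_{v ∈ V\{0}} |f(v)|/‖v‖_V, R_V : V → V' the Riesz map determined by (R_V v)(w) = (v,w)_V, B : U → V' a continuous linear operator with associated bilinear form b(u,v) = (Bu)(v), and U_h a subspace of U. Define the optimal test space V^opt = R_V⁻¹(B(U_h)) = {R_V⁻¹(B δu) : δu ∈ U_h}. Then for every u ∈ U_h with Bu ≠ 0, sup_{v ∈ V^opt\{0}} |b(u,v)|/‖v‖_V = ‖Bu‖_{V'} = sup_{v ∈ V\{0}} |b(u,v)|/‖v‖_V. Consequently, if γ > 0 satisfies ‖Bu‖_{V'} ≥ γ‖u‖_U for all u ∈ U (the continuous inf-sup condition), then for every nonzero u ∈ U_h, sup_{v ∈ V^opt\{0}} |b(u,v)|/‖v‖_V ≥ γ‖u‖_U, i.e. the discrete pair (U_h, V^opt) inherits the stability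 of the original problem. -/
/-!
Every ratio `‖f v‖ / ‖v‖` is bounded by `‖f‖`, and the Riesz representative `w = R_V⁻¹ f`
attains the bound, since `f w = ‖w‖²` and `‖w‖ = ‖f‖`. For `f = B u` with `u ∈ U_h` this
representative lies in `V^opt` by construction, so the supremum over `V^opt` is attained there
and equals the supremum over all of `V`. The inf-sup bound `γ ‖u‖ ≤ ‖B u‖` then transfers
verbatim to the discrete pair.
-/

open InnerProductSpace

section RieszRatio

variable {𝕜 E : Type*} [RCLike 𝕜] [NormedAddCommGroup E] [InnerProductSpace 𝕜 E] [CompleteSpace E]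

theorem norm_apply_toDual_symm_div_norm (f : StrongDual 𝕜 E) :
    ‖f ((toDual 𝕜 E).symm f)‖ / ‖(toDual 𝕜 E).symm f‖ = ‖f‖ := by
  set w := (toDual 𝕜 E).symm f
  have hfw : ‖f w‖ = ‖w‖ ^ 2 := by
    rw [← toDual_symm_apply, inner_self_eq_norm_sq_to_K, norm_pow, RCLike.norm_ofReal, abs_norm]
  rw [hfw, sq, mul_self_div_self, LinearIsometryEquiv.norm_map]

theorem isGreatest_ratio_image_of_toDual_symm_mem (f : StrongDual 𝕜 E) {S : Set E}
    (hS : (toDual 𝕜 E).symm f ∈ S) :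
    IsGreatest ((fun v => ‖f v‖ / ‖v‖) '' S) ‖f‖ :=
  ⟨⟨_, hS, norm_apply_toDual_symm_div_norm f⟩, by
    rintro _ ⟨v, -, rfl⟩
    exact f.ratio_le_opNorm v⟩

theorem sSup_ratio_image_eq_opNorm (f : StrongDual 𝕜 E) {S : Set E}
    (hS : (toDual 𝕜 E).symm f ∈ S) :
    sSup ((fun v => ‖f v‖ / ‖v‖) '' S) = ‖f‖ :=
  (isGreatest_ratio_image_of_toDual_symm_mem f hS).csSup_eq

theorem toDual_symm_mem_compl_zero {f : StrongDual 𝕜 E} (hf : f ≠ 0) :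
    (toDual 𝕜 E).symm f ∈ ({0}ᶜ : Set E) := by
  simpa using hf

end RieszRatio

theorem stmt_7_general {U V : Type*}
    [NormedAddCommGroup U] [InnerProductSpace ℝ U]
    [NormedAddCommGroup V] [InnerProductSpace ℝ V] [CompleteSpace V]
    (B : U →L[ℝ] StrongDual ℝ V)
    (Uh : Submodule ℝ U)
    (Vopt : Set V)
    (hVopt : Vopt =
      (fun δu => (InnerProductSpace.toDual ℝ V).symm (B δu)) '' (Uh : Set U)) :
    (∀ u ∈ Uh, B u ≠ 0 →
        sSup ((fun v => ‖B u v‖ / ‖v‖) '' (Vopt \ {0})) = ‖B u‖ ∧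
        ‖B u‖ = sSup ((fun v => ‖B u v‖ / ‖v‖) '' {v : V | v ≠ 0})) ∧
      ∀ γ : ℝ, 0 < γ → (∀ u : U, γ * ‖u‖ ≤ ‖B u‖) →
        ∀ u ∈ Uh, u ≠ 0 →
          γ * ‖u‖ ≤ sSup ((fun v => ‖B u v‖ / ‖v‖) '' (Vopt \ {0})) := by
  have hsup : ∀ u ∈ Uh, B u ≠ 0 →
      sSup ((fun v => ‖B u v‖ / ‖v‖) '' (Vopt \ {0})) = ‖B u‖ := fun u hu hBu =>
    sSup_ratio_image_eq_opNorm (B u)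
      ⟨hVopt ▸ ⟨u, hu, rfl⟩, toDual_symm_mem_compl_zero hBu⟩
  refine ⟨fun u hu hBu => ⟨hsup u hu hBu,
    (sSup_ratio_image_eq_opNorm (B u) (toDual_symm_mem_compl_zero hBu)).symm⟩, ?_⟩
  intro γ hγ hinfsup u hu hu0
  have hBu : B u ≠ 0 := by
    intro h
    have : γ * ‖u‖ ≤ 0 := by simpa [h] using hinfsup u
    exact hu0 (norm_le_zero_iff.mp (nonpos_of_mul_nonpos_right this hγ))
  exact hsup u hu hBu ▸ hinfsup u

/-- Optimal test space reproduces the supremum: for `u ∈ U_h` with `Bu ≠ 0`,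
the supremum of `|b(u,v)|/‖v‖` over the nonzero elements of the optimal test
space `V^opt = R_V⁻¹(B(U_h))` equals `‖Bu‖_{V'}`, which equals the supremum
over all nonzero `v ∈ V`. Consequently, a continuous inf-sup condition with
constant `γ > 0` is inherited by the discrete pair `(U_h, V^opt)`. -/
theorem stmt_7 {U V : Type*}
    [NormedAddCommGroup U] [InnerProductSpace ℝ U] [CompleteSpace U]
    [NormedAddCommGroup V] [InnerProductSpace ℝ V] [CompleteSpace V]
    (B : U →L[ℝ] StrongDual ℝ V)
    (Uh : Submodule ℝ U)
    (Vopt : Set V)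
    (hVopt : Vopt =
      (fun δu => (InnerProductSpace.toDual ℝ V).symm (B δu)) '' (Uh : Set U)) :
    (∀ u ∈ Uh, B u ≠ 0 →
        sSup ((fun v => ‖B u v‖ / ‖v‖) '' (Vopt \ {0})) = ‖B u‖ ∧
        ‖B u‖ = sSup ((fun v => ‖B u v‖ / ‖v‖) '' {v : V | v ≠ 0})) ∧
      ∀ γ : ℝ, 0 < γ → (∀ u : U, γ * ‖u‖ ≤ ‖B u‖) →
        ∀ u ∈ Uh, u ≠ 0 →
          γ * ‖u‖ ≤ sSup ((fun v => ‖B u v‖ / ‖v‖) '' (Vopt \ {0})) :=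
  stmt_7_general B Uh Vopt hVopt
end

section
/- Let U and V be real Hilbert spaces, V' the topological dual of V with dual norm ‖f‖_{V'} = sup_{v ∈ V\{0}} |f(v)|/‖v‖_V, R_V : V → V' the Riesz map determined by (R_V v)(w) = (v,w)_V, B : U → V' a continuous linear operator with associated bilinear form b(u,v) = (Bu)(v), ℓ ∈ V', U_h a closed subspace of U, and V^opt = R_V⁻¹(B(U_h)) the optimal test space. Then u_h ∈ U_h satisfies the Petrov–Galerkin equations b(u_h, δv) = ℓ(δv) for all δv ∈ V^opt if and only if u_h minimizes u ↦ ‖Bu − ℓ‖_{V'}² over U_h. -/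
/-!
Through the Riesz map the dual norm of the residual `B u - ℓ` becomes the norm of its Riesz
representative, and `V^opt` is exactly the set of representatives of the directions `B δu`,
`δu ∈ U_h`. Writing `r` for the representative of `B u_h - ℓ`, the Petrov–Galerkin equations say
`r ⟂ V^opt`, while minimality says `‖r‖ ≤ ‖r + w‖` for all `w ∈ V^opt`. Since `V^opt` is closed
under scaling, these agree: `‖r + t w‖² - ‖r‖² = 2t⟪r, w⟫ + t²‖w‖²` is nonnegative for all real
`t` exactly when its linear coefficient vanishes.
-/

open RealInnerProductSpace

section Orthogonality

variable {E : Type*} [NormedAddCommGroup E] [InnerProductSpace ℝ E]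

theorem real_inner_eq_zero_iff_forall_norm_le_norm_add_smul (r w : E) :
    ⟪r, w⟫ = 0 ↔ ∀ t : ℝ, ‖r‖ ≤ ‖r + t • w‖ := by
  -- the quadratic in `t` is written in the shape expected by `discrim_le_zero`
  have hquadratic : ∀ t : ℝ,
      ‖r‖ ≤ ‖r + t • w‖ ↔ 0 ≤ ‖w‖ ^ 2 * (t * t) + 2 * ⟪r, w⟫ * t + 0 := by
    intro t
    rw [← pow_le_pow_iff_left₀ (norm_nonneg _) (norm_nonneg _) two_ne_zero, norm_add_sq_real,
      real_inner_smul_right, norm_smul, mul_pow, Real.norm_eq_abs, sq_abs]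
    constructor <;> intro h <;> linarith
  simp_rw [hquadratic]
  constructor
  · intro h t
    rw [h, mul_zero, zero_mul, add_zero, add_zero]
    exact mul_nonneg (sq_nonneg _) (mul_self_nonneg t)
  · intro h
    have hdiscrim := discrim_le_zero h
    rw [discrim] at hdiscrim
    nlinarith [sq_nonneg ⟪r, w⟫]

theorem forall_real_inner_eq_zero_iff_forall_norm_le_norm_add {K : Set E}
    (hK : ∀ t : ℝ, ∀ w ∈ K, t • w ∈ K) (r : E) :
    (∀ w ∈ K, ⟪r, w⟫ = 0) ↔ ∀ w ∈ K, ‖r‖ ≤ ‖r + w‖ := by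
  simp_rw [real_inner_eq_zero_iff_forall_norm_le_norm_add_smul]
  constructor
  · intro h w hw
    simpa using h w hw 1
  · intro h w hw t
    exact h _ (hK t w hw)

end Orthogonality

theorem stmt_8_general {U V : Type*}
    [NormedAddCommGroup U] [InnerProductSpace ℝ U]
    [NormedAddCommGroup V] [InnerProductSpace ℝ V] [CompleteSpace V]
    (B : U →L[ℝ] StrongDual ℝ V) (ℓ : StrongDual ℝ V)
    (Uh : Submodule ℝ U)
    (Vopt : Set V)
    (hVopt : Vopt =
      (fun δu => (InnerProductSpace.toDual ℝ V).symm (B δu)) '' (Uh : Set U))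
    (uh : U) (huh : uh ∈ Uh) :
    (∀ δv ∈ Vopt, B uh δv = ℓ δv) ↔
      (∀ u ∈ Uh, ‖B uh - ℓ‖ ^ 2 ≤ ‖B u - ℓ‖ ^ 2) := by
  set e := InnerProductSpace.toDual ℝ V
  set r := e.symm (B uh - ℓ) with hr
  have hresidual (v : V) : B uh v - ℓ v = ⟪r, v⟫ := by
    rw [InnerProductSpace.toDual_symm_apply, sub_apply]
  have hnorm (u : U) : ‖B u - ℓ‖ = ‖r + e.symm (B (u - uh))‖ := by
    rw [hr, ← map_add, map_sub B, sub_add_sub_cancel', e.symm.norm_map]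
  have hVopt_smul : ∀ t : ℝ, ∀ w ∈ Vopt, t • w ∈ Vopt := by
    subst hVopt
    rintro t _ ⟨δu, hδu, rfl⟩
    exact ⟨t • δu, Uh.smul_mem t hδu, by simp⟩
  calc (∀ δv ∈ Vopt, B uh δv = ℓ δv)
      ↔ ∀ δv ∈ Vopt, ⟪r, δv⟫ = 0 := by simp_rw [← hresidual, sub_eq_zero]
    _ ↔ ∀ δv ∈ Vopt, ‖r‖ ≤ ‖r + δv‖ :=
        forall_real_inner_eq_zero_iff_forall_norm_le_norm_add hVopt_smul r
    _ ↔ ∀ u ∈ Uh, ‖r‖ ≤ ‖r + e.symm (B (u - uh))‖ := by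
        rw [hVopt, Set.forall_mem_image]
        exact ⟨fun h u hu => h (Uh.sub_mem hu huh),
          fun h δu hδu => by simpa using h (δu + uh) (Uh.add_mem hδu huh)⟩
    _ ↔ ∀ u ∈ Uh, ‖B uh - ℓ‖ ^ 2 ≤ ‖B u - ℓ‖ ^ 2 := by
        simp_rw [hnorm, sub_self, map_zero, add_zero,
          pow_le_pow_iff_left₀ (norm_nonneg _) (norm_nonneg _) two_ne_zero]

/-- Petrov–Galerkin characterization of the residual minimizer: `u_h ∈ U_h`
satisfies `b(u_h, δv) = ℓ(δv)` for all `δv` in the optimal test space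
`V^opt = R_V⁻¹(B(U_h))` if and only if `u_h` minimizes `u ↦ ‖Bu − ℓ‖_{V'}²`
over `U_h`. -/
theorem stmt_8 {U V : Type*}
    [NormedAddCommGroup U] [InnerProductSpace ℝ U] [CompleteSpace U]
    [NormedAddCommGroup V] [InnerProductSpace ℝ V] [CompleteSpace V]
    (B : U →L[ℝ] StrongDual ℝ V) (ℓ : StrongDual ℝ V)
    (Uh : Submodule ℝ U) (hUh : IsClosed (Uh : Set U))
    (Vopt : Set V)
    (hVopt : Vopt =
      (fun δu => (InnerProductSpace.toDual ℝ V).symm (B δu)) '' (Uh : Set U))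
    (uh : U) (huh : uh ∈ Uh) :
    (∀ δv ∈ Vopt, B uh δv = ℓ δv) ↔
      (∀ u ∈ Uh, ‖B uh - ℓ‖ ^ 2 ≤ ‖B u - ℓ‖ ^ 2) :=
  stmt_8_general B ℓ Uh Vopt hVopt uh huh
end

section
/- Let U and V be real Hilbert spaces, B : U → V' a continuous linear operator with associated bilinear form b(u,v) = (Bu)(v), ℓ ∈ V', U_h a closed subspace of U, and let W be a closed subspace of V (the enriched test space V^enr), which is itself a Hilbert space under the inner product of V; let R_W : W → W' denote the Riesz map of W, and for f ∈ V' let f|_W ∈ W' denote its restriction to W, with ‖f|_W‖_{W'} = sup_{v ∈ W\{0}} |f(v)|/‖v‖_V. Then a pair (u_h, ψ_h) ∈ U_h × W satisfies the discrete saddle-point system: −(ψ_h, v)_V + b(u_h, v) = ℓ(v) for all v ∈ W, and b(δu, ψ_h) = 0 for all δu ∈ U_h, if and only if ψ_h = R_W⁻¹((B u_h − ℓ)|_W) and u_h minimizes u ↦ ‖(Bu − ℓ)|_W‖_{W'}² over U_h. -/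
open scoped RealInnerProductSpace

/-!
Transport everything to `W` by the Riesz map: `r u := R_W⁻¹((B u − ℓ)|_W)` is affine in `u`, with
linear part `A := R_W⁻¹ ∘ (·|_W) ∘ B`, and `‖r u‖ = ‖(B u − ℓ)|_W‖_{W'}`. The first equation says
`ψ_h = r u_h`, and then `b(δu, ψ_h) = ⟪A δu, r u_h⟫`, so the second equation says `r u_h ⟂ A U_h`.
Since `r u = r u_h − A (u_h − u)`, this orthogonality is exactly the statement that `r u_h` has
minimal norm in `r u_h + A U_h`, the usual characterisation of a best approximation.
-/

section

variable {E F : Type*} [NormedAddCommGroup F] [InnerProductSpace ℝ F]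

theorem Submodule.forall_norm_le_norm_sub_iff_forall_inner_eq_zero (K : Submodule ℝ F) (x : F) :
    (∀ w ∈ K, ‖x‖ ≤ ‖x - w‖) ↔ ∀ w ∈ K, ⟪x, w⟫ = 0 := by
  have hinf := norm_eq_iInf_iff_real_inner_eq_zero K (u := x) K.zero_mem
  simp only [sub_zero] at hinf
  rw [← hinf]
  have hbdd : BddBelow (Set.range fun w : (K : Set F) => ‖x - w‖) :=
    ⟨0, by rintro _ ⟨w, rfl⟩; exact norm_nonneg _⟩
  constructor
  · intro h
    refine le_antisymm (le_ciInf fun w => h w w.2) ?_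
    simpa using ciInf_le hbdd ⟨0, K.zero_mem⟩
  · intro h w hw
    exact h ▸ ciInf_le hbdd ⟨w, hw⟩

theorem LinearMap.forall_norm_le_norm_sub_iff_forall_inner_eq_zero [AddCommGroup E] [Module ℝ E]
    (A : E →ₗ[ℝ] F) (S : Submodule ℝ E) (x : F) :
    (∀ u ∈ S, ‖x‖ ≤ ‖x - A u‖) ↔ ∀ u ∈ S, ⟪x, A u⟫ = 0 := by
  simpa using (S.map A).forall_norm_le_norm_sub_iff_forall_inner_eq_zero x

theorem Submodule.forall_mem_sub_iff [AddCommGroup E] [Module ℝ E] (S : Submodule ℝ E) {a : E}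
    (ha : a ∈ S) (P : E → Prop) : (∀ u ∈ S, P (a - u)) ↔ ∀ u ∈ S, P u :=
  ⟨fun h u hu => sub_sub_cancel a u ▸ h (a - u) (S.sub_mem ha hu),
    fun h u hu => h (a - u) (S.sub_mem ha hu)⟩

end

namespace Submodule

variable {V : Type*} [NormedAddCommGroup V] [InnerProductSpace ℝ V]
  (W : Submodule ℝ V) [CompleteSpace W]

noncomputable def rieszRestrict : StrongDual ℝ V →L[ℝ] W :=
  (InnerProductSpace.toDual ℝ W).symm.toContinuousLinearEquiv.toContinuousLinearMap ∘L
    W.subtypeL.precomp ℝ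

theorem rieszRestrict_apply (f : StrongDual ℝ V) :
    W.rieszRestrict f = (InnerProductSpace.toDual ℝ W).symm (f.comp W.subtypeL) := rfl

variable {W}

@[simp]
theorem inner_rieszRestrict_left (f : StrongDual ℝ V) (w : W) : ⟪W.rieszRestrict f, w⟫ = f w :=
  InnerProductSpace.toDual_symm_apply

theorem norm_rieszRestrict (f : StrongDual ℝ V) : ‖W.rieszRestrict f‖ = ‖f.comp W.subtypeL‖ :=
  (InnerProductSpace.toDual ℝ W).symm.norm_map _

theorem eq_rieszRestrict_iff {ψ : W} {f : StrongDual ℝ V} :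
    ψ = W.rieszRestrict f ↔ ∀ w : W, ⟪ψ, w⟫ = f w := by
  refine ⟨fun h w => h ▸ inner_rieszRestrict_left f w, fun h => ext_inner_right ℝ fun w => ?_⟩
  rw [h, inner_rieszRestrict_left]

end Submodule

theorem stmt_11_general {U V : Type*}
    [NormedAddCommGroup U] [InnerProductSpace ℝ U]
    [NormedAddCommGroup V] [InnerProductSpace ℝ V] [CompleteSpace V]
    (B : U →L[ℝ] StrongDual ℝ V) (ℓ : StrongDual ℝ V)
    (Uh : Submodule ℝ U)
    (W : Submodule ℝ V) (hW : IsClosed (W : Set V))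
    (uh : U) (huh : uh ∈ Uh) (ψh : W) :
    letI : CompleteSpace W := hW.completeSpace_coe
    ((∀ v : W, -⟪(ψh : V), (v : V)⟫ + B uh v = ℓ v) ∧
        (∀ δu ∈ Uh, B δu (ψh : V) = 0)) ↔
      (ψh = (InnerProductSpace.toDual ℝ W).symm ((B uh - ℓ).comp W.subtypeL) ∧
        ∀ u ∈ Uh,
          ‖(B uh - ℓ).comp W.subtypeL‖ ^ 2 ≤ ‖(B u - ℓ).comp W.subtypeL‖ ^ 2) := by
  have : CompleteSpace W := hW.completeSpace_coe
  set A : U →L[ℝ] W := W.rieszRestrict ∘L B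
  have hfirst : (∀ v : W, -⟪(ψh : V), (v : V)⟫ + B uh v = ℓ v) ↔
      ψh = W.rieszRestrict (B uh - ℓ) := by
    rw [Submodule.eq_rieszRestrict_iff]
    refine forall_congr' fun v => ?_
    rw [Submodule.coe_inner, sub_apply]
    constructor <;> intro h <;> linarith
  simp only [hfirst, ← Submodule.rieszRestrict_apply, ← Submodule.norm_rieszRestrict,
    sq_le_sq₀ (norm_nonneg _) (norm_nonneg _)]
  refine and_congr_right fun hψ => ?_
  have hres (u : U) : W.rieszRestrict (B u - ℓ) = ψh - A (uh - u) := by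
    simp [A, hψ]
  simp only [← hψ, hres]
  have hmin := (A : U →ₗ[ℝ] W).forall_norm_le_norm_sub_iff_forall_inner_eq_zero Uh ψh
  simp only [ContinuousLinearMap.coe_coe] at hmin
  rw [Uh.forall_mem_sub_iff huh (fun δu => ‖_‖ ≤ ‖_ - A δu‖), hmin]
  refine forall₂_congr fun δu _ => ?_
  rw [real_inner_comm, ContinuousLinearMap.comp_apply, Submodule.inner_rieszRestrict_left]

/-- Discrete saddle-point characterization with an enriched test space: for a
closed subspace `W ⊆ V` (the enriched test space), a pair `(u_h, ψ_h)` with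
`u_h ∈ U_h` and `ψ_h ∈ W` satisfies `−(ψ_h,v)_V + b(u_h,v) = ℓ(v)` for all
`v ∈ W` and `b(δu,ψ_h) = 0` for all `δu ∈ U_h` if and only if
`ψ_h = R_W⁻¹((B u_h − ℓ)|_W)` and `u_h` minimizes `u ↦ ‖(Bu − ℓ)|_W‖_{W'}²`
over `U_h`. -/
theorem stmt_11 {U V : Type*}
    [NormedAddCommGroup U] [InnerProductSpace ℝ U] [CompleteSpace U]
    [NormedAddCommGroup V] [InnerProductSpace ℝ V] [CompleteSpace V]
    (B : U →L[ℝ] StrongDual ℝ V) (ℓ : StrongDual ℝ V)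
    (Uh : Submodule ℝ U) (hUh : IsClosed (Uh : Set U))
    (W : Submodule ℝ V) (hW : IsClosed (W : Set V))
    (uh : U) (huh : uh ∈ Uh) (ψh : W) :
    letI : CompleteSpace W := hW.completeSpace_coe
    ((∀ v : W, -⟪(ψh : V), (v : V)⟫ + B uh v = ℓ v) ∧
        (∀ δu ∈ Uh, B δu (ψh : V) = 0)) ↔
      (ψh = (InnerProductSpace.toDual ℝ W).symm ((B uh - ℓ).comp W.subtypeL) ∧
        ∀ u ∈ Uh,
          ‖(B uh - ℓ).comp W.subtypeL‖ ^ 2 ≤ ‖(B u - ℓ).comp W.subtypeL‖ ^ 2) :=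
  stmt_11_general B ℓ Uh W hW uh huh ψh
end
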